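/- arXiv:2509.17014 — 2 statements merged into one kernel-verified Lean document; each statement's English description precedes it below -/
import Mathlib

section
/- A set of commuting, Hermitian, involutory, traceless operators T_1, …, T_n on an n-qubit Hilbert space, whose products T(t) = ∏_i T_i^{t_i} (for nonzero t ∈ {0,1}^n) are all traceless, can be simultaneously conjugated to the Pauli operators Z_1, …, Z_n: there exists a unitary U such that T_i = U Z_i U† for all i. -/
open Matrix BigOperators

/-- Operators on the `n`-qubit Hilbert space, as matrices indexed by computational
basis states. -/
abbrev QOp (n : ℕ) := Matrix (Fin n → Fin 2) (Fin n → Fin 2) ℂ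

/-- Pure states of `n` qubits, as amplitude functions on the computational basis. -/
abbrev QState (n : ℕ) := (Fin n → Fin 2) → ℂ

/-- `O` acts only on the qubits in `A`, i.e. `O = O_A ⊗ I` on the complement of `A`. -/
def ActsOn {n : ℕ} (O : QOp n) (A : Finset (Fin n)) : Prop :=
  (∀ x y : Fin n → Fin 2, (∃ i, i ∉ A ∧ x i ≠ y i) → O x y = 0) ∧
  (∀ x y x' y' : Fin n → Fin 2,
    (∀ i ∈ A, x i = x' i) → (∀ i ∈ A, y i = y' i) →
    (∀ i, i ∉ A → x i = y i) → (∀ i, i ∉ A → x' i = y' i) →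
    O x y = O x' y')

/-- The weight of an operator: the minimal size of a set of qubits supporting it
(the size of its support). -/
noncomputable def opWt {n : ℕ} (O : QOp n) : ℕ :=
  sInf {k | ∃ A : Finset (Fin n), ActsOn O A ∧ A.card = k}

/-- A single layer of `K`-bounded fan-in gates: a tensor product, over a partition of
the qubits into blocks of size at most `K`, of unitaries acting on the blocks. -/
def IsLayer {n : ℕ} (K : ℕ) (U : QOp n) : Prop :=
  ∃ (P : Finpartition (Finset.univ : Finset (Fin n))) (f : Finset (Fin n) → QOp n)
    (hc : (P.parts : Set (Finset (Fin n))).Pairwise fun A B => Commute (f A) (f B)),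
    (∀ A ∈ P.parts, A.card ≤ K ∧ f A ∈ Matrix.unitaryGroup (Fin n → Fin 2) ℂ ∧
      ActsOn (f A) A) ∧
    U = P.parts.noncommProd f hc

/-- A depth-`D` non-adaptive circuit with `K`-bounded fan-in gates. -/
def IsDepthCircuit {n : ℕ} (K D : ℕ) (U : QOp n) : Prop :=
  ∃ f : Fin D → QOp n, (∀ d, IsLayer K (f d)) ∧ U = (List.ofFn f).prod

/-- Pauli `X` on qubit `i`. -/
noncomputable def XOp (n : ℕ) (i : Fin n) : QOp n :=
  Matrix.of fun x y => if y = Function.update x i (x i + 1) then 1 else 0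

/-- Pauli `Z` on qubit `i`. -/
noncomputable def ZOp (n : ℕ) (i : Fin n) : QOp n :=
  Matrix.diagonal fun x => if x i = 0 then 1 else -1

/-- Pauli `Y` on qubit `i` (`Y = iXZ`). -/
noncomputable def YOp (n : ℕ) (i : Fin n) : QOp n := Complex.I • (XOp n i * ZOp n i)

/-- The four single-qubit Pauli operators `{I, X, Y, Z}` at site `i`. -/
noncomputable def PauliAt (n : ℕ) (i : Fin n) : Set (QOp n) :=
  {1, XOp n i, YOp n i, ZOp n i}

/-- `∏ i, (S i)^(t i)` for a family of operators and exponents `t : Fin d → Bool`. -/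
noncomputable def prodPow {d n : ℕ} (S : Fin d → QOp n) (t : Fin d → Bool) : QOp n :=
  (List.ofFn fun i => if t i then S i else 1).prod

/-- An `n`-qubit Pauli operator: a phase in `{±1, ±i}` times a tensor product of
single-qubit Pauli operators. -/
def IsPauli {n : ℕ} (P : QOp n) : Prop :=
  ∃ (c : ℂ) (f : Fin n → QOp n),
    (c = 1 ∨ c = -1 ∨ c = Complex.I ∨ c = -Complex.I) ∧
    (∀ i, f i ∈ PauliAt n i) ∧ P = c • (List.ofFn f).prod

/-- The all-zeros computational basis state `|0^n⟩`. -/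
noncomputable def ket0 (n : ℕ) : QState n := fun x => if x = fun _ => 0 then 1 else 0

/-- The computational basis state `|s⟩`. -/
noncomputable def basisKet {n : ℕ} (s : Fin n → Fin 2) : QState n := fun x => if x = s then 1 else 0

/-- Inner product `⟨χ|η⟩`. -/
noncomputable def qInner {n : ℕ} (χ η : QState n) : ℂ :=
  ∑ x, (starRingEnd ℂ) (χ x) * η x

/-- Expectation value `⟨ψ|O|ψ⟩`. -/
noncomputable def expectation {n : ℕ} (O : QOp n) (ψ : QState n) : ℂ :=
  ∑ x, (starRingEnd ℂ) (ψ x) * O.mulVec ψ x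

/-- Correlation function `Cor(O₁,O₂,|ψ⟩) = ⟨ψ|O₁O₂|ψ⟩ − ⟨ψ|O₁|ψ⟩⟨ψ|O₂|ψ⟩`. -/
noncomputable def Cor {n : ℕ} (O₁ O₂ : QOp n) (ψ : QState n) : ℂ :=
  expectation (O₁ * O₂) ψ - expectation O₁ ψ * expectation O₂ ψ

/-- Euclidean norm of a state vector. -/
noncomputable def vnorm {n : ℕ} (v : QState n) : ℝ :=
  Real.sqrt (∑ x, Complex.normSq (v x))

/-- The projector `|ψ⟩⟨ψ|`. -/
noncomputable def projOf {n : ℕ} (ψ : QState n) : QOp n :=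
  Matrix.of fun x y => ψ x * (starRingEnd ℂ) (ψ y)

/-- The stabilizer group of a state: all Pauli operators fixing it. -/
def stabGroup {n : ℕ} (ψ : QState n) : Set (QOp n) :=
  {P | IsPauli P ∧ P.mulVec ψ = ψ}

/-- `ψ` is a stabilizer state: a normalized common `+1` eigenstate of `n` independent
commuting Pauli operators. -/
def IsStabilizerState {n : ℕ} (ψ : QState n) : Prop :=
  (∑ x, Complex.normSq (ψ x) = 1) ∧
  ∃ S : Fin n → QOp n, (∀ i, IsPauli (S i)) ∧ (∀ i j, Commute (S i) (S j)) ∧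
    (∀ t : Fin n → Bool, prodPow S t = 1 → t = fun _ => false) ∧
    (∀ i, (S i).mulVec ψ = ψ)

/-- `S` is a set of stabilizer generators for `ψ`: each `S i` is a Pauli fixing `ψ`,
and every Pauli fixing `ψ` is a product of the `S i`. -/
def IsGenSet {n : ℕ} (ψ : QState n) (S : Fin n → QOp n) : Prop :=
  (∀ i, IsPauli (S i) ∧ (S i).mulVec ψ = ψ) ∧
  ∀ P : QOp n, IsPauli P → P.mulVec ψ = ψ → ∃ t : Fin n → Bool, P = prodPow S t

/-- The weights of the generators `S`, sorted in non-increasing order. -/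
noncomputable def sortedWts {n : ℕ} (S : Fin n → QOp n) : List ℕ :=
  (Multiset.sort
    ((Finset.univ.val : Multiset (Fin n)).map fun i => opWt (S i)) (· ≤ ·)).reverse

/-- `S` is a generating set of the stabilizer group of `ψ` whose sorted
(non-increasing) weight vector is lexicographically minimal. -/
def MinimalGenSet {n : ℕ} (ψ : QState n) (S : Fin n → QOp n) : Prop :=
  IsGenSet ψ S ∧ ∀ S' : Fin n → QOp n, IsGenSet ψ S' →
    ¬ List.Lex (· < ·) (sortedWts S') (sortedWts S)

/-- The Pauli correlation range `CR_P(|ψ⟩)`: the maximal size of a region `A` in which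
every pair of distinct qubits has a nonzero two-point Pauli correlation. -/
noncomputable def CRP {n : ℕ} (ψ : QState n) : ℕ :=
  sSup {k | ∃ A : Finset (Fin n), A.card = k ∧
    ∀ i ∈ A, ∀ j ∈ A, i ≠ j →
      ∃ Pi ∈ PauliAt n i, ∃ Pj ∈ PauliAt n j, Cor Pi Pj ψ ≠ 0}

/-- State weight: the minimum over all unitaries `U` preparing `ψ` from `|0^n⟩` of
the maximal weight of the generalized stabilizer generators `U Z_i U†`. -/
noncomputable def stateWt {n : ℕ} (ψ : QState n) : ℕ :=
  sInf {w | ∃ U : QOp n, U ∈ Matrix.unitaryGroup (Fin n → Fin 2) ℂ ∧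
    U.mulVec (ket0 n) = ψ ∧
    w = Finset.univ.sup fun i : Fin n => opWt (U * ZOp n i * star U)}

/-- Restriction of an `(n+k)`-bit string to its first `n` bits. -/
def frontBits {n k : ℕ} (u : Fin (n + k) → Fin 2) : Fin n → Fin 2 :=
  fun i => u (Fin.castAdd k i)

/-- Restriction of an `(n+k)`-bit string to its last `k` bits. -/
def backBits {n k : ℕ} (u : Fin (n + k) → Fin 2) : Fin k → Fin 2 :=
  fun i => u (Fin.natAdd n i)

/-- The operator `S ⊗ Z^z` on `n+k` qubits, where `Z^z = ⊗ᵢ Z_i^{z_i}` acts on the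
last `k` qubits. -/
noncomputable def kronZ {n k : ℕ} (S : QOp n) (z : Fin k → Bool) : QOp (n + k) :=
  Matrix.of fun u v =>
    S (frontBits u) (frontBits v) *
      (if backBits u = backBits v then
        ∏ i, (if z i = true ∧ backBits u i = 1 then (-1 : ℂ) else 1)
      else 0)

/-- The product `∏_{i ∈ A} Z_i` as a diagonal operator. -/
noncomputable def ZProd (n : ℕ) (A : Finset (Fin n)) : QOp n :=
  Matrix.diagonal fun x => ∏ i ∈ A, (if x i = 0 then (1 : ℂ) else -1)

/-- The `n`-qubit GHZ state `(|0…0⟩ + |1…1⟩)/√2`. -/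
noncomputable def ghz (n : ℕ) : QState n := fun x =>
  if (∀ i, x i = 0) ∨ (∀ i, x i = 1) then ((Real.sqrt 2 : ℝ) : ℂ)⁻¹ else 0

/-- The `n`-qubit W state. -/
noncomputable def wState (n : ℕ) : QState n := fun x =>
  if (Finset.univ.filter fun i => x i = 1).card = 1 then ((Real.sqrt n : ℝ) : ℂ)⁻¹ else 0

/-- The `n`-qubit hypergraph state `CZ_n |+⟩^{⊗n}`, where `CZ_n = I − 2|0⟩⟨0|^{⊗n}`. -/
noncomputable def hgState (n : ℕ) : QState n := fun x =>
  (if ∀ i, x i = 0 then (-1 : ℂ) else 1) * (((Real.sqrt 2)⁻¹ : ℝ) : ℂ) ^ n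

/-- Fidelity of `χ` with states prepared from `|0^n⟩` by circuits from the class `𝒱`. -/
noncomputable def Ffid {n : ℕ} (𝒱 : Set (QOp n)) (χ : QState n) : ℝ :=
  sSup ((fun V => ‖qInner χ (V.mulVec (ket0 n))‖ ^ 2) '' 𝒱)

/-- `F_{D,n}(χ)`: maximal fidelity of `χ` with outputs of depth-`D` circuits of
`K`-bounded fan-in gates applied to `|0^n⟩`. -/
noncomputable def FDn {n : ℕ} (K D : ℕ) (χ : QState n) : ℝ :=
  sSup ((fun U => ‖qInner χ (U.mulVec (ket0 n))‖ ^ 2) '' {U | IsDepthCircuit K D U})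

/-!
For a sign pattern `s`, the product `∏ i, (1 + (-1)^(s i) T i)` is `2 ^ n` times the projector
onto the joint eigenspace on which each `T i` acts as `(-1)^(s i)`. Expanding the product, every
nontrivial monomial is traceless, so its trace is `trace 1 = 2 ^ n ≠ 0` and that joint eigenspace
is nonzero. Joint eigenvectors for different sign patterns are orthogonal because the `T i` are
Hermitian, so normalized joint eigenvectors, one for each of the `2 ^ n` sign patterns, are the
columns of a unitary `U` with `T i U = U Z i`.
-/

section SignProjector

variable {ι R : Type*} [Fintype ι] [DecidableEq ι] [CommRing R]

def zSign (b : Fin 2) : ℤ := if b = 0 then 1 else -1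

lemma zSign_mul_self (b : Fin 2) : zSign b * zSign b = 1 := by
  unfold zSign; split <;> rfl

lemma zSign_injective : Function.Injective zSign := by
  unfold zSign; decide

def signProj (x : ι → R) (s : ι → Fin 2) : R := ∏ i, (1 + zSign (s i) • x i)

lemma mul_signProj {x : ι → R} (hx : ∀ i, x i * x i = 1) (s : ι → Fin 2) (i : ι) :
    x i * signProj x s = zSign (s i) • signProj x s := by
  have hfactor : x i * (1 + zSign (s i) • x i) = zSign (s i) • (1 + zSign (s i) • x i) := by
    rw [mul_add, mul_one, mul_smul_comm, hx, smul_add, smul_smul, zSign_mul_self, one_smul,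
      add_comm]
  rw [signProj, ← Finset.mul_prod_erase _ _ (Finset.mem_univ i), ← mul_assoc, hfactor,
    smul_mul_assoc]

lemma signProj_eq_sum (x : ι → R) (s : ι → Fin 2) :
    signProj x s =
      ∑ t : ι → Bool, (∏ i, if t i then zSign (s i) else 1) • ∏ i, if t i then x i else 1 := by
  have hbool : ∀ i, 1 + zSign (s i) • x i = ∑ b : Bool, if b then zSign (s i) • x i else 1 := by
    simp [add_comm]
  rw [signProj, Finset.prod_congr rfl fun i _ => hbool i, Fintype.prod_sum]
  refine Finset.sum_congr rfl fun t _ => ?_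
  simp only [zsmul_eq_mul, Int.cast_prod, ← Finset.prod_mul_distrib]
  exact Finset.prod_congr rfl fun i _ => by split <;> simp

lemma map_signProj_eq_map_one {M : Type*} [AddCommGroup M] (f : R →+ M) {x : ι → R}
    (hf : ∀ t : ι → Bool, t ≠ (fun _ => false) → f (∏ i, if t i then x i else 1) = 0)
    (s : ι → Fin 2) : f (signProj x s) = f 1 := by
  rw [signProj_eq_sum, map_sum, Finset.sum_eq_single (fun _ => false)]
  · simp
  · intro t _ ht
    rw [map_zsmul, hf t ht, smul_zero]
  · simp

end SignProjector

section Eigenvectors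

variable {m κ ι : Type*} [Fintype m]

lemma exists_mulVec_eq_smul_of_mul_eq_smul [DecidableEq m] {R : Type*} [CommRing R]
    (T : ι → Matrix m m R) {Q : Matrix m m R} (hQ : Q ≠ 0) (c : ι → R)
    (hTQ : ∀ i, T i * Q = c i • Q) : ∃ w ≠ 0, ∀ i, T i *ᵥ w = c i • w := by
  obtain ⟨j, hj⟩ : ∃ j, Q.col j ≠ 0 := by
    by_contra! h
    exact hQ (Matrix.ext fun x y => congrFun (h y) x)
  refine ⟨Q.col j, hj, fun i => ?_⟩
  rw [← mulVec_single_one, mulVec_mulVec, hTQ, smul_mulVec]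

lemma star_dotProduct_eq_zero_of_isHermitian {𝕜 : Type*} [Field 𝕜] [StarRing 𝕜]
    {T : Matrix m m 𝕜} (hT : T.IsHermitian) {u v : m → 𝕜} {a b : 𝕜} (ha : star a = a)
    (hu : T *ᵥ u = a • u) (hv : T *ᵥ v = b • v) (hab : a ≠ b) : star u ⬝ᵥ v = 0 := by
  have hsymm : b * (star u ⬝ᵥ v) = a * (star u ⬝ᵥ v) := by
    calc b * (star u ⬝ᵥ v)
        = star u ⬝ᵥ (T *ᵥ v) := by rw [hv, dotProduct_smul, smul_eq_mul]
      _ = star (T *ᵥ u) ⬝ᵥ v := by rw [dotProduct_mulVec, star_mulVec, hT.eq]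
      _ = a * (star u ⬝ᵥ v) := by rw [hu, star_smul, ha, smul_dotProduct, smul_eq_mul]
  exact (mul_left_injective₀ (sub_ne_zero.mpr hab)).eq_iff.mp (by linear_combination -hsymm)

open ComplexOrder in
lemma exists_star_smul_dotProduct_smul_self_eq_one {w : m → ℂ} (hw : w ≠ 0) :
    ∃ c : ℂ, star (c • w) ⬝ᵥ (c • w) = 1 := by
  obtain ⟨hre, him⟩ := Complex.pos_iff.mp (dotProduct_star_self_pos_iff.mpr hw)
  set r := (star w ⬝ᵥ w).re
  have hnorm : star w ⬝ᵥ w = (r : ℂ) := Complex.ext rfl (by simpa using him.symm)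
  refine ⟨((√r)⁻¹ : ℝ), ?_⟩
  rw [star_smul, smul_dotProduct, dotProduct_smul, hnorm, smul_eq_mul, smul_eq_mul,
    Complex.star_def, Complex.conj_ofReal, ← mul_assoc, ← Complex.ofReal_mul,
    ← Complex.ofReal_mul, ← mul_inv, Real.mul_self_sqrt hre.le, inv_mul_cancel₀ hre.ne',
    Complex.ofReal_one]

lemma transpose_of_mem_unitaryGroup [DecidableEq m] {u : m → m → ℂ}
    (hu : ∀ s s', star (u s) ⬝ᵥ u s' = (1 : Matrix m m ℂ) s s') :
    (of u)ᵀ ∈ unitaryGroup m ℂ := by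
  rw [mem_unitaryGroup_iff']
  ext s s'
  rw [← hu, mul_apply']
  rfl

lemma mul_transpose_of_eq_transpose_of_mul_diagonal [Fintype κ] [DecidableEq κ] {R : Type*}
    [CommRing R] {T : Matrix m m R} {u : κ → m → R} {c : κ → R}
    (hu : ∀ s, T *ᵥ u s = c s • u s) :
    T * (of u)ᵀ = (of u)ᵀ * diagonal c := by
  ext x s
  rw [mul_diagonal, mul_apply', transpose_apply, of_apply, mul_comm]
  exact congrFun (hu s) x

end Eigenvectors

lemma ZOp_eq_diagonal_zSign (n : ℕ) (i : Fin n) :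
    ZOp n i = diagonal fun x => (zSign (x i) : ℂ) := by
  unfold ZOp zSign
  congr 1
  ext x
  split <;> simp

open scoped IsMulCommutative in
lemma exists_common_eigenvector {d n : ℕ} (T : Fin d → QOp n) (hinv : ∀ i, T i * T i = 1)
    (hcomm : ∀ i j, Commute (T i) (T j))
    (htrProd : ∀ t : Fin d → Bool, t ≠ (fun _ => false) → (prodPow T t).trace = 0)
    (s : Fin d → Fin 2) : ∃ w ≠ 0, ∀ i, T i *ᵥ w = (zSign (s i) : ℂ) • w := by
  -- Products of the `T i` are expanded in the commutative subalgebra they generate.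
  let A := Algebra.adjoin ℂ (Set.range T)
  have : IsMulCommutative A := Algebra.isMulCommutative_adjoin ℂ <| by
    rintro _ ⟨i, rfl⟩ _ ⟨j, rfl⟩
    exact hcomm i j
  let x : Fin d → A := fun i => ⟨T i, Algebra.subset_adjoin ⟨i, rfl⟩⟩
  have hx : ∀ i, x i * x i = 1 := fun i => Subtype.ext (hinv i)
  have hmonomial : ∀ t, ((∏ i, if t i then x i else 1 : A) : QOp n) = prodPow T t := by
    intro t
    rw [prodPow, ← List.prod_ofFn, ← A.val_apply, map_list_prod, List.map_ofFn]
    congr 2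
    funext i
    simp only [Function.comp_apply, apply_ite A.val, map_one]
    rfl
  have htrace : ((signProj x s : A) : QOp n).trace = (1 : QOp n).trace :=
    map_signProj_eq_map_one ((traceAddMonoidHom _ ℂ).comp A.val.toAddMonoidHom)
      (fun t ht => by simpa [hmonomial] using htrProd t ht) s
  refine exists_mulVec_eq_smul_of_mul_eq_smul T (Q := (signProj x s : A)) (fun hQ => ?_) _
    fun i => ?_
  · exact pow_ne_zero n two_ne_zero (by simpa [hQ] using htrace.symm : (2 : ℂ) ^ n = 0)
  · rw [Int.cast_smul_eq_zsmul]
    exact congrArg Subtype.val (mul_signProj hx s i)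

lemma exists_orthonormal_common_eigenvectors {d n : ℕ} (T : Fin d → QOp n)
    (hherm : ∀ i, (T i).IsHermitian) (hinv : ∀ i, T i * T i = 1)
    (hcomm : ∀ i j, Commute (T i) (T j))
    (htrProd : ∀ t : Fin d → Bool, t ≠ (fun _ => false) → (prodPow T t).trace = 0) :
    ∃ u : (Fin d → Fin 2) → QState n,
      (∀ s s', star (u s) ⬝ᵥ u s' = (1 : Matrix _ _ ℂ) s s') ∧
      ∀ s i, T i *ᵥ u s = (zSign (s i) : ℂ) • u s := by
  choose w hw0 hw using exists_common_eigenvector T hinv hcomm htrProd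
  choose c hc using fun s => exists_star_smul_dotProduct_smul_self_eq_one (hw0 s)
  have heigen : ∀ s i, T i *ᵥ (c s • w s) = (zSign (s i) : ℂ) • (c s • w s) := by
    intro s i
    rw [mulVec_smul, hw, smul_comm]
  refine ⟨fun s => c s • w s, fun s s' => ?_, heigen⟩
  obtain rfl | hne := eq_or_ne s s'
  · rw [hc, one_apply_eq]
  obtain ⟨i, hi⟩ := Function.ne_iff.mp hne
  rw [one_apply_ne hne]
  exact star_dotProduct_eq_zero_of_isHermitian (hherm i) (by simp) (heigen s i) (heigen s' i)
    (Int.cast_injective.ne (zSign_injective.ne hi))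

theorem generalized_stabilizers_conjugate_to_Z_general {n : ℕ} (T : Fin n → QOp n)
    (hherm : ∀ i, (T i).IsHermitian)
    (hinv : ∀ i, T i * T i = 1)
    (hcomm : ∀ i j, Commute (T i) (T j))
    (htrProd : ∀ t : Fin n → Bool, t ≠ (fun _ => false) → (prodPow T t).trace = 0) :
    ∃ U ∈ Matrix.unitaryGroup (Fin n → Fin 2) ℂ,
      ∀ i, T i = U * ZOp n i * star U := by
  obtain ⟨u, horth, heigen⟩ := exists_orthonormal_common_eigenvectors T hherm hinv hcomm htrProd
  have hU := transpose_of_mem_unitaryGroup horth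
  refine ⟨(of u)ᵀ, hU, fun i => ?_⟩
  calc T i = T i * (of u)ᵀ * star (of u)ᵀ := by
        rw [mul_assoc, mem_unitaryGroup_iff.mp hU, mul_one]
    _ = (of u)ᵀ * ZOp n i * star (of u)ᵀ := by
        rw [ZOp_eq_diagonal_zSign, mul_transpose_of_eq_transpose_of_mul_diagonal (heigen · i)]

/-- commuting, Hermitian, involutory operators all of whose nontrivial
products are traceless can be simultaneously conjugated to `Z_1, …, Z_n`. -/
theorem generalized_stabilizers_conjugate_to_Z {n : ℕ} (T : Fin n → QOp n)
    (hherm : ∀ i, (T i).IsHermitian)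
    (hinv : ∀ i, T i * T i = 1)
    (htr : ∀ i, (T i).trace = 0)
    (hcomm : ∀ i j, Commute (T i) (T j))
    (htrProd : ∀ t : Fin n → Bool, t ≠ (fun _ => false) → (prodPow T t).trace = 0) :
    ∃ U ∈ Matrix.unitaryGroup (Fin n → Fin 2) ℂ,
      ∀ i, T i = U * ZOp n i * star U :=
  generalized_stabilizers_conjugate_to_Z_general T hherm hinv hcomm htrProd
end

section
/- For the n-qubit hypergraph state |HG⟩ = CZ_n |+⟩^{⊗n}, where CZ_n = I − 2|0⟩⟨0|^{⊗n}, and distinct qubits i ≠ j, the correlation function of X_i and X_j equals (1/2^{n−2})(1 − 1/2^{n−2}). -/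
open Matrix BigOperators

/-!
`X_i` and `X_i X_j` permute the computational basis by flipping bits, so both expectation values
are sums `∑ₓ ψ(x) ψ(σ x)` over an involution `σ` that moves `0ⁿ`. The amplitudes of `|HG⟩` are
`±2^{-n/2}` with a single minus sign, at `0ⁿ`; the pairs `(0ⁿ, σ 0ⁿ)` and `(σ 0ⁿ, 0ⁿ)` are the only
negative terms, so both expectations equal `a = 1 - 4/2ⁿ = 1 - 2^{-(n-2)}`, and the correlation is
`a - a² = a (1 - a)`.
-/

def flipBit {n : ℕ} (i : Fin n) (x : Fin n → Fin 2) : Fin n → Fin 2 :=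
  Function.update x i (x i + 1)

section flipBit

variable {n : ℕ}

@[simp]
lemma flipBit_apply_self (i : Fin n) (x : Fin n → Fin 2) : flipBit i x i = x i + 1 := by
  simp [flipBit]

lemma flipBit_apply_of_ne {i k : Fin n} (h : k ≠ i) (x : Fin n → Fin 2) :
    flipBit i x k = x k :=
  Function.update_of_ne h _ _

lemma flipBit_involutive (i : Fin n) : Function.Involutive (flipBit i) := by
  intro x
  funext k
  rcases eq_or_ne k i with rfl | h
  · simp [add_assoc]
  · simp [flipBit_apply_of_ne h]

lemma flipBit_comm (i j : Fin n) (x : Fin n → Fin 2) :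
    flipBit i (flipBit j x) = flipBit j (flipBit i x) := by
  funext k
  rcases eq_or_ne k i with rfl | hi <;> rcases eq_or_ne k j with rfl | hj <;>
    simp [flipBit_apply_of_ne, *]

lemma flipBit_comp_involutive (i j : Fin n) :
    Function.Involutive (flipBit j ∘ flipBit i) := by
  intro x
  rw [Function.comp_apply, Function.comp_apply, flipBit_comm i j, flipBit_involutive i,
    flipBit_involutive j]

lemma flipBit_ne_self (i : Fin n) (x : Fin n → Fin 2) : flipBit i x ≠ x :=
  fun h => by simpa using congrFun h i

lemma flipBit_flipBit_ne_self {i j : Fin n} (hij : i ≠ j) (x : Fin n → Fin 2) :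
    flipBit j (flipBit i x) ≠ x :=
  fun h => by simpa [flipBit_apply_of_ne hij] using congrFun h i

end flipBit

lemma XOp_mulVec_apply {n : ℕ} (i : Fin n) (ψ : QState n) (x : Fin n → Fin 2) :
    (XOp n i *ᵥ ψ) x = ψ (flipBit i x) := by
  simp [XOp, flipBit, mulVec, dotProduct]

lemma XOp_mul_XOp_mulVec_apply {n : ℕ} (i j : Fin n) (ψ : QState n) (x : Fin n → Fin 2) :
    ((XOp n i * XOp n j) *ᵥ ψ) x = ψ (flipBit j (flipBit i x)) := by
  rw [← mulVec_mulVec, XOp_mulVec_apply, XOp_mulVec_apply]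

lemma sum_sign_mul_sign_comp {α R : Type*} [Fintype α] [DecidableEq α] [CommRing R]
    {σ : α → α} (hσ : Function.Involutive σ) {z : α} (hz : σ z ≠ z) :
    ∑ x, (if x = z then (-1 : R) else 1) * (if σ x = z then -1 else 1) =
      Fintype.card α - 4 := by
  have hterm : ∀ x, (if x = z then (-1 : R) else 1) * (if σ x = z then -1 else 1) =
      1 - 2 * (if x = z then 1 else 0) - 2 * (if x = σ z then 1 else 0) := by
    intro x
    have hσx : σ x = z ↔ x = σ z := ⟨fun h => h ▸ (hσ x).symm, fun h => h ▸ hσ z⟩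
    rcases eq_or_ne x z with rfl | hxz
    · simp [hz, Ne.symm hz]
      norm_num
    rcases eq_or_ne x (σ z) with rfl | hx
    · simp [hσ z, hz]
      norm_num
    · simp [hxz, hx, hσx]
  simp only [hterm, Finset.sum_sub_distrib, ← Finset.mul_sum, Finset.sum_ite_eq',
    Finset.mem_univ, if_true, Finset.sum_const, Finset.card_univ, nsmul_eq_mul, mul_one]
  ring

section hgState

variable {n : ℕ}

lemma hgState_eq_sign_mul (x : Fin n → Fin 2) :
    hgState n x = (if x = 0 then -1 else 1) * (((Real.sqrt 2)⁻¹ : ℝ) : ℂ) ^ n := by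
  unfold hgState
  congr 1
  exact if_congr funext_iff.symm rfl rfl

lemma conj_hgState (x : Fin n → Fin 2) : starRingEnd ℂ (hgState n x) = hgState n x := by
  simp only [hgState, map_mul, map_pow, Complex.conj_ofReal, apply_ite (starRingEnd ℂ), map_neg,
    map_one]

lemma sum_conj_hgState_mul_hgState_comp {σ : (Fin n → Fin 2) → (Fin n → Fin 2)}
    (hσ : Function.Involutive σ) (h0 : σ 0 ≠ 0) :
    ∑ x, starRingEnd ℂ (hgState n x) * hgState n (σ x) = 1 - 4 / 2 ^ n := by
  have hsq : (((Real.sqrt 2)⁻¹ : ℝ) : ℂ) ^ n * (((Real.sqrt 2)⁻¹ : ℝ) : ℂ) ^ n = (2 ^ n)⁻¹ := by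
    rw [← mul_pow, ← Complex.ofReal_mul, ← mul_inv,
      Real.mul_self_sqrt zero_le_two, Complex.ofReal_inv, Complex.ofReal_ofNat, inv_pow]
  calc ∑ x, starRingEnd ℂ (hgState n x) * hgState n (σ x)
      = (∑ x, (if x = 0 then (-1 : ℂ) else 1) * (if σ x = 0 then -1 else 1)) * (2 ^ n)⁻¹ := by
        rw [Finset.sum_mul, ← hsq]
        refine Finset.sum_congr rfl fun x _ => ?_
        rw [conj_hgState, hgState_eq_sign_mul, hgState_eq_sign_mul]
        ring
    _ = 1 - 4 / 2 ^ n := by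
        rw [sum_sign_mul_sign_comp hσ h0, Fintype.card_fun, Fintype.card_fin, Fintype.card_fin]
        field_simp
        push_cast
        ring

lemma expectation_hgState_of_mulVec_eq_comp {O : QOp n}
    {σ : (Fin n → Fin 2) → (Fin n → Fin 2)} (hσ : Function.Involutive σ) (h0 : σ 0 ≠ 0)
    (hO : ∀ x, (O *ᵥ hgState n) x = hgState n (σ x)) :
    expectation O (hgState n) = 1 - 4 / 2 ^ n := by
  simp only [expectation, hO, sum_conj_hgState_mul_hgState_comp hσ h0]

lemma expectation_XOp_hgState (i : Fin n) :
    expectation (XOp n i) (hgState n) = 1 - 4 / 2 ^ n :=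
  expectation_hgState_of_mulVec_eq_comp (flipBit_involutive i) (flipBit_ne_self i 0)
    (XOp_mulVec_apply i _)

lemma expectation_XOp_mul_XOp_hgState {i j : Fin n} (hij : i ≠ j) :
    expectation (XOp n i * XOp n j) (hgState n) = 1 - 4 / 2 ^ n :=
  expectation_hgState_of_mulVec_eq_comp (flipBit_comp_involutive i j)
    (flipBit_flipBit_ne_self hij 0) (XOp_mul_XOp_mulVec_apply i j _)

end hgState

/-- for the hypergraph state `|HG⟩ = CZ_n |+⟩^{⊗n}` and distinct qubits
`i ≠ j`, `Cor(X_i, X_j, |HG⟩) = 2^{-(n-2)}(1 − 2^{-(n-2)})`. -/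
theorem hypergraph_XX_correlation {n : ℕ} (hn : 2 ≤ n) (i j : Fin n) (hij : i ≠ j) :
    Cor (XOp n i) (XOp n j) (hgState n) =
      ((2 : ℂ) ^ (n - 2))⁻¹ * (1 - ((2 : ℂ) ^ (n - 2))⁻¹) := by
  have hfour : (4 : ℂ) / 2 ^ n = ((2 : ℂ) ^ (n - 2))⁻¹ := by
    obtain ⟨m, rfl⟩ := Nat.exists_eq_add_of_le' hn
    rw [Nat.add_sub_cancel, pow_add]
    field_simp
    norm_num
  rw [Cor, expectation_XOp_mul_XOp_hgState hij, expectation_XOp_hgState,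
    expectation_XOp_hgState, hfour]
  ring
end
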